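/- arXiv:0706.3398 — 4 statements merged into one kernel-verified Lean document; each statement's English description precedes it below -/
import Mathlib

section
/- Let $p, r \ge 1$ and $q$ be integers, and let $A$ be the $(p+r)\times(p+r)$ integer matrix whose upper-left $(p+r-1)\times(p+r-1)$ block is the tridiagonal matrix with $-2$ on the diagonal and $1$ on the off-diagonals, whose last diagonal entry is $q$, whose $(p, p+r)$ and $(p+r, p)$ entries are $1$, and all other entries $0$. Then $\det A = (-1)^{p+r}(-q(p+r) - pr)$. -/
/-!
Let `T` be the matrix of the path of `n = p + r - 1` vertices of weight `-2`, so that `A` is `T`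
bordered by the pendant vertex. With `N = n + 1`, the discrete Green's function
`g m = min m p * (N - max m p)` vanishes at `0` and `N` and has second difference `-N` at `p` and
`0` elsewhere. Multiplying the last row of `A` by `N` and adding `g (i + 1)` times the `i`-th row
therefore clears the last row except for the corner, which becomes `g p + N q = p r + N q`; hence
`N * det A = det T * (p r + N q)`. A path of `n + 1` vertices is the same picture with the pendant
vertex attached at `p = n`, which gives `det T = (-1) ^ n * N` by induction.
-/

/-- The incidence matrix of the plumbing graph: a path of `p+r-1` vertices of weight `-2`
(the upper-left tridiagonal block), together with one extra vertex of weight `q` (last index)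
attached by an edge to the `p`-th vertex of the path. -/
def pretzelPlumbing (p r : ℕ) (q : ℤ) : Matrix (Fin (p + r)) (Fin (p + r)) ℤ :=
  Matrix.of fun i j =>
    if i = j then (if (i : ℕ) = p + r - 1 then q else -2)
    else if (i : ℕ) < p + r - 1 ∧ (j : ℕ) < p + r - 1 ∧ ((i : ℤ) - (j : ℤ)).natAbs = 1 then 1
    else if ((i : ℕ) = p - 1 ∧ (j : ℕ) = p + r - 1) ∨ ((i : ℕ) = p + r - 1 ∧ (j : ℕ) = p - 1)
      then 1 else 0

namespace Matrix

variable {R : Type*} [CommRing R]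

theorem det_mul_det_fromBlocks_of_mul_add_mul_eq_zero {m n : Type*} [Fintype m] [Fintype n]
    [DecidableEq m] [DecidableEq n] (A : Matrix m m R) (B : Matrix m n R)
    (C : Matrix n m R) (D : Matrix n n R) (X : Matrix n m R) (S : Matrix n n R)
    (h : X * A + S * C = 0) :
    S.det * (fromBlocks A B C D).det = A.det * (X * B + S * D).det := by
  have := det_mul (fromBlocks 1 0 X S) (fromBlocks A B C D)
  simpa [fromBlocks_multiply, h, det_fromBlocks_zero₁₂, det_fromBlocks_zero₂₁] using this.symm

theorem mul_det_eq_det_submatrix_castSucc_mul {n : ℕ} (A : Matrix (Fin (n + 1)) (Fin (n + 1)) R)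
    (c : Fin n → R) (s : R)
    (h : ∀ j : Fin n, ∑ i, c i * A i.castSucc j.castSucc + s * A (Fin.last n) j.castSucc = 0) :
    s * A.det = (A.submatrix Fin.castSucc Fin.castSucc).det *
      (∑ i, c i * A i.castSucc (Fin.last n) + s * A (Fin.last n) (Fin.last n)) := by
  set M := A.submatrix finSumFinEquiv finSumFinEquiv
  have key := det_mul_det_fromBlocks_of_mul_add_mul_eq_zero M.toBlocks₁₁ M.toBlocks₁₂ M.toBlocks₂₁
    M.toBlocks₂₂ (of fun (_ : Fin 1) => c) (of fun _ _ => s) (by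
      ext _ j
      simp only [M, toBlocks₁₁, toBlocks₂₁, submatrix_apply, finSumFinEquiv_apply_left,
        finSumFinEquiv_apply_right, add_apply, mul_apply, of_apply, Finset.univ_unique,
        Finset.sum_singleton, zero_apply]
      exact h j)
  rw [fromBlocks_toBlocks, det_submatrix_equiv_self] at key
  simp only [M, det_unique, of_apply, toBlocks₁₁, toBlocks₁₂, toBlocks₂₂, submatrix_apply,
    finSumFinEquiv_apply_left, finSumFinEquiv_apply_right, add_apply, mul_apply,
    Finset.univ_unique, Finset.sum_singleton] at key
  exact key

end Matrix

def pathMatrix (n : ℕ) : Matrix (Fin n) (Fin n) ℤ :=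
  Matrix.of fun i j => if i = j then -2 else if ((i : ℤ) - (j : ℤ)).natAbs = 1 then 1 else 0

/-- `-pathGreen N p m / N` is the `(m, p)` entry of the inverse of `pathMatrix (N - 1)`,
indexed from `1`. -/
def pathGreen (N p m : ℤ) : ℤ :=
  min m p * (N - max m p)

theorem pathGreen_of_le {N p m : ℤ} (h : m ≤ p) : pathGreen N p m = m * (N - p) := by
  rw [pathGreen, min_eq_left h, max_eq_right h]

theorem pathGreen_of_ge {N p m : ℤ} (h : p ≤ m) : pathGreen N p m = p * (N - m) := by
  rw [pathGreen, min_eq_right h, max_eq_left h]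

theorem pathGreen_zero (N : ℤ) {p : ℤ} (hp : 0 ≤ p) : pathGreen N p 0 = 0 := by
  rw [pathGreen_of_le hp, zero_mul]

theorem pathGreen_sub_two_mul_add (N p m : ℤ) :
    pathGreen N p (m - 1) - 2 * pathGreen N p m + pathGreen N p (m + 1) =
      if m = p then -N else 0 := by
  rcases lt_trichotomy m p with h | rfl | h
  · rw [pathGreen_of_le (by omega), pathGreen_of_le h.le, pathGreen_of_le h, if_neg h.ne]
    ring
  · rw [pathGreen_of_le (by omega), pathGreen_of_le le_rfl, pathGreen_of_ge (by omega), if_pos rfl]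
    ring
  · rw [pathGreen_of_ge (by omega), pathGreen_of_ge h.le, pathGreen_of_ge (by omega), if_neg h.ne']
    ring

theorem sum_mul_pathMatrix {n : ℕ} (f : ℤ → ℤ) (h0 : f 0 = 0) (hn : f (n + 1) = 0) (j : Fin n) :
    ∑ k : Fin n, f ((k : ℕ) + 1) * pathMatrix n k j = f j - 2 * f (j + 1) + f (j + 2) := by
  obtain ⟨j, hj⟩ := j
  have hsplit : ∀ k : ℕ,
      f (k + 1) * (if k = j then -2 else if ((k : ℤ) - j).natAbs = 1 then 1 else 0) =
        (if k + 1 = j then f j else 0) - 2 * (if j = k then f (j + 1) else 0)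
        + (if j + 1 = k then f (j + 2) else 0) := by
    intro k
    split_ifs <;> first | omega | (subst_vars; push_cast; ring_nf)
  simp only [pathMatrix, Matrix.of_apply, Fin.ext_iff]
  rw [Fin.sum_univ_eq_sum_range (fun k => f (k + 1) *
    (if k = j then -2 else if ((k : ℤ) - j).natAbs = 1 then 1 else 0)) n]
  simp only [hsplit, Finset.sum_add_distrib, Finset.sum_sub_distrib, ← Finset.mul_sum,
    Finset.sum_ite_eq, Finset.mem_range, hj, if_true]
  have hprev : (∑ k ∈ Finset.range n, if k + 1 = j then f j else 0) = f j := by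
    cases j with
    | zero => simp [h0]
    | succ j => simp [Finset.sum_ite_eq', show j < n by omega]
  have hnext : (if j + 1 < n then f (j + 2) else 0) = f (j + 2) := by
    split_ifs with h
    · rfl
    · rw [show (j : ℤ) + 2 = n + 1 by omega, hn]
  rw [hprev, hnext]

theorem sum_pathGreen_mul_pathMatrix {n p : ℕ} (hp : p ≤ n + 1) (j : Fin n) :
    ∑ k : Fin n, pathGreen (n + 1) p ((k : ℕ) + 1) * pathMatrix n k j =
      if (j : ℕ) + 1 = p then -((n : ℤ) + 1) else 0 := by
  rw [sum_mul_pathMatrix _ (pathGreen_zero _ (by omega))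
    (by rw [pathGreen_of_ge (by omega)]; ring)]
  have h := pathGreen_sub_two_mul_add (n + 1) p (j + 1)
  rw [add_sub_cancel_right, add_assoc, one_add_one_eq_two] at h
  rw [h]
  norm_cast

theorem sum_mul_ite_succ_eq {n p : ℕ} (hp : p ≤ n) (f : ℤ → ℤ) (h0 : f 0 = 0) :
    ∑ i : Fin n, f ((i : ℕ) + 1) * (if (i : ℕ) + 1 = p then 1 else 0) = f p := by
  cases p with
  | zero => simp [h0]
  | succ p =>
    rw [Fin.sum_univ_eq_sum_range (fun i => f ((i : ℕ) + 1) * (if i + 1 = p + 1 then 1 else 0)) n]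
    simp [Finset.sum_ite_eq', show p < n by omega]

theorem natCast_succ_mul_det_of_pendant {n p : ℕ} (hp : p ≤ n)
    (A : Matrix (Fin (n + 1)) (Fin (n + 1)) ℤ)
    (hpath : A.submatrix Fin.castSucc Fin.castSucc = pathMatrix n)
    (hcol : ∀ i : Fin n, A i.castSucc (Fin.last n) = if (i : ℕ) + 1 = p then 1 else 0)
    (hrow : ∀ j : Fin n, A (Fin.last n) j.castSucc = if (j : ℕ) + 1 = p then 1 else 0) :
    ((n : ℤ) + 1) * A.det =
      (pathMatrix n).det * (p * (n + 1 - p) + (n + 1) * A (Fin.last n) (Fin.last n)) := by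
  have hT (i j : Fin n) : A i.castSucc j.castSucc = pathMatrix n i j := by rw [← hpath]; rfl
  have h := Matrix.mul_det_eq_det_submatrix_castSucc_mul A
    (fun i => pathGreen (n + 1) p ((i : ℕ) + 1)) (n + 1) fun j => by
      simp only [hT, hrow, sum_pathGreen_mul_pathMatrix (by omega : p ≤ n + 1)]
      split_ifs <;> ring
  simp only [hcol] at h
  rwa [hpath, sum_mul_ite_succ_eq hp _ (pathGreen_zero _ (by omega)), pathGreen_of_le le_rfl] at h

theorem pathMatrix_submatrix_castSucc (n : ℕ) :
    (pathMatrix (n + 1)).submatrix Fin.castSucc Fin.castSucc = pathMatrix n := by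
  ext i j
  simp [pathMatrix]

theorem pathMatrix_castSucc_last {n : ℕ} (i : Fin n) :
    pathMatrix (n + 1) i.castSucc (Fin.last n) = if (i : ℕ) + 1 = n then 1 else 0 := by
  simp only [pathMatrix, Matrix.of_apply, Fin.ext_iff, Fin.val_castSucc, Fin.val_last]
  split_ifs <;> omega

theorem pathMatrix_last_castSucc {n : ℕ} (j : Fin n) :
    pathMatrix (n + 1) (Fin.last n) j.castSucc = if (j : ℕ) + 1 = n then 1 else 0 := by
  simp only [pathMatrix, Matrix.of_apply, Fin.ext_iff, Fin.val_castSucc, Fin.val_last]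
  split_ifs <;> omega

theorem det_pathMatrix (n : ℕ) : (pathMatrix n).det = (-1) ^ n * (n + 1) := by
  induction n with
  | zero => simp
  | succ n ih =>
    have h := natCast_succ_mul_det_of_pendant le_rfl (pathMatrix (n + 1))
      (pathMatrix_submatrix_castSucc n) pathMatrix_castSucc_last pathMatrix_last_castSucc
    rw [ih, show pathMatrix (n + 1) (Fin.last n) (Fin.last n) = -2 by simp [pathMatrix]] at h
    refine mul_left_cancel₀ (by positivity : (n : ℤ) + 1 ≠ 0) ?_
    rw [h]
    push_cast
    ring

theorem pretzelPlumbing_submatrix_castSucc (p r : ℕ) (q : ℤ) :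
    (pretzelPlumbing p (r + 1) q).submatrix (Fin.castSucc : Fin (p + r) → _) Fin.castSucc =
      pathMatrix (p + r) := by
  ext i j
  simp only [pretzelPlumbing, pathMatrix, Matrix.submatrix_apply, Matrix.of_apply, Fin.ext_iff,
    Fin.val_castSucc]
  split_ifs <;> omega

theorem pretzelPlumbing_castSucc_last {p : ℕ} (hp : 1 ≤ p) (r : ℕ) (q : ℤ) (i : Fin (p + r)) :
    pretzelPlumbing p (r + 1) q i.castSucc (Fin.last (p + r)) =
      if (i : ℕ) + 1 = p then 1 else 0 := by
  simp only [pretzelPlumbing, Matrix.of_apply, Fin.ext_iff, Fin.val_castSucc, Fin.val_last]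
  split_ifs <;> omega

theorem pretzelPlumbing_last_castSucc {p : ℕ} (hp : 1 ≤ p) (r : ℕ) (q : ℤ) (j : Fin (p + r)) :
    pretzelPlumbing p (r + 1) q (Fin.last (p + r)) j.castSucc =
      if (j : ℕ) + 1 = p then 1 else 0 := by
  simp only [pretzelPlumbing, Matrix.of_apply, Fin.ext_iff, Fin.val_castSucc, Fin.val_last]
  split_ifs <;> omega

theorem pretzelPlumbing_last_last (p r : ℕ) (q : ℤ) :
    pretzelPlumbing p (r + 1) q (Fin.last (p + r)) (Fin.last (p + r)) = q := by
  simp [pretzelPlumbing]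

theorem det_pretzelPlumbing (p r : ℕ) (q : ℤ) (hp : 1 ≤ p) (hr : 1 ≤ r) :
    (pretzelPlumbing p r q).det = (-1) ^ (p + r) * (-q * (p + r) - p * r) := by
  obtain ⟨r, rfl⟩ : ∃ r', r = r' + 1 := ⟨r - 1, by omega⟩
  have h := natCast_succ_mul_det_of_pendant (n := p + r) (by omega) (pretzelPlumbing p (r + 1) q)
    (pretzelPlumbing_submatrix_castSucc p r q) (pretzelPlumbing_castSucc_last hp r q)
    (pretzelPlumbing_last_castSucc hp r q)
  rw [det_pathMatrix, pretzelPlumbing_last_last] at h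
  refine mul_left_cancel₀ (by positivity : ((p + r : ℕ) : ℤ) + 1 ≠ 0) ?_
  rw [h]
  push_cast
  ring
end

section
/- Let $p, r \ge 1$ and $q \le -1$ be integers, and let $A$ be the symmetric $(p+r)\times(p+r)$ integer matrix whose upper-left $(p+r-1)\times(p+r-1)$ block is the tridiagonal matrix with $-2$ on the diagonal and $1$ on the off-diagonals, whose $(p+r,p+r)$ entry is $q$, whose $(p, p+r)$ and $(p+r, p)$ entries are $1$, and all other entries $0$. Then $A$ is negative definite if and only if $1/p + 1/q + 1/r > 0$. -/
/-!
Write `x = (x₀, …, x_{p+r-2}, t)` and pad the path part by zeros at both ends to a function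
`v : ℕ → ℝ` with `v 0 = v (p+r) = 0` and `v (i+1) = xᵢ`. Then
`xᵀAx = q t² + 2 v(p) t - ∑_{i < p+r} (v(i+1) - v(i))²`.
Cauchy–Schwarz on the two arms `[0, p]` and `[p, p+r]` bounds the sum of squared differences
below by `(1/p + 1/r) v(p)²`, and completing the square gives `q t² + 2 v(p) t ≤ -v(p)²/q`
for `q < 0`; hence `xᵀAx ≤ -(1/p + 1/q + 1/r) v(p)²`, with strict inequality unless `x = 0`.
Conversely the tent function, linear on both arms, together with `t = -v(p)/q` attains
equality in both bounds, so `xᵀAx = -(pr)² (1/p + 1/q + 1/r)` for it.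
-/

open Finset Matrix

theorem sum_sum_mul_add_swap_mul {ι R : Type*} [CommSemiring R] (s : Finset ι) (g : ι → R)
    (N : ι → ι → R) :
    ∑ i ∈ s, ∑ j ∈ s, g i * (N i j + N j i) * g j = 2 * ∑ i ∈ s, ∑ j ∈ s, g i * N i j * g j := by
  simp only [mul_add, add_mul, sum_add_distrib]
  rw [sum_comm (f := fun i j => g i * N j i * g j), two_mul]
  congr 1
  exact sum_congr rfl fun i _ => sum_congr rfl fun j _ => by ring

theorem sum_range_sq_sub_eq {α : Type*} [CommRing α] (v : ℕ → α) (n : ℕ) (h0 : v 0 = 0)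
    (hn : v (n + 1) = 0) :
    ∑ i ∈ range (n + 1), (v (i + 1) - v i) ^ 2 =
      2 * ∑ i ∈ range n, v (i + 1) ^ 2 - 2 * ∑ i ∈ range n, v (i + 1) * v (i + 2) := by
  have hsq : ∀ i, (v (i + 1) - v i) ^ 2 = v (i + 1) ^ 2 + v i ^ 2 - 2 * (v i * v (i + 1)) :=
    fun i => by ring
  simp only [hsq, sum_add_distrib, sum_sub_distrib, ← mul_sum]
  rw [sum_range_succ (fun i => v (i + 1) ^ 2), sum_range_succ' (fun i => v i ^ 2),
    sum_range_succ' (fun i => v i * v (i + 1))]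
  simp [h0, hn]
  ring

section OrderedRing

variable {α : Type*} [CommRing α] [LinearOrder α] [IsStrictOrderedRing α]

theorem sq_sub_le_mul_sum_sq_sub (f : ℕ → α) {a b : ℕ} (hab : a ≤ b) :
    (f b - f a) ^ 2 ≤ (b - a : ℕ) * ∑ i ∈ Ico a b, (f (i + 1) - f i) ^ 2 := by
  simpa [sum_Ico_sub f hab] using
    sq_sum_le_card_mul_sum_sq (s := Ico a b) (f := fun i => f (i + 1) - f i)

theorem eq_zero_of_sum_sq_sub_eq_zero (v : ℕ → α) {n : ℕ} (h0 : v 0 = 0)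
    (h : ∑ i ∈ range n, (v (i + 1) - v i) ^ 2 = 0) {k : ℕ} (hk : k ≤ n) : v k = 0 := by
  induction k with
  | zero => exact h0
  | succ k ih =>
    have hterm := (sum_eq_zero_iff_of_nonneg fun i _ => sq_nonneg (v (i + 1) - v i)).1 h k
      (mem_range.2 hk)
    rw [sub_eq_zero.1 (pow_eq_zero_iff two_ne_zero |>.1 hterm)]
    exact ih (by omega)

end OrderedRing

theorem one_div_add_one_div_mul_sq_le_sum_sq_sub {α : Type*} [Field α] [LinearOrder α]
    [IsStrictOrderedRing α] (v : ℕ → α) {p r : ℕ} (hp : 0 < p) (hr : 0 < r)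
    (h0 : v 0 = 0) (hn : v (p + r) = 0) :
    (1 / (p : α) + 1 / r) * v p ^ 2 ≤ ∑ i ∈ range (p + r), (v (i + 1) - v i) ^ 2 := by
  have hleft := sq_sub_le_mul_sum_sq_sub v (Nat.zero_le p)
  have hright := sq_sub_le_mul_sum_sq_sub v (Nat.le_add_right p r)
  rw [h0, sub_zero, Nat.sub_zero, ← range_eq_Ico] at hleft
  rw [hn, zero_sub, neg_sq, Nat.add_sub_cancel_left] at hright
  rw [← sum_range_add_sum_Ico _ (Nat.le_add_right p r), add_mul]
  gcongr
  · rwa [one_div, inv_mul_le_iff₀ (by positivity)]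
  · rwa [one_div, inv_mul_le_iff₀ (by positivity)]

def tent (p r i : ℕ) : ℝ := min ((i : ℝ) * r) (p * (p + r - i))

theorem tent_eq_of_le {p r i : ℕ} (h : i ≤ p) : tent p r i = i * r := by
  have : (i : ℝ) ≤ p := by exact_mod_cast h
  exact min_eq_left (by nlinarith)

theorem tent_eq_of_ge {p r i : ℕ} (h : p ≤ i) : tent p r i = p * (p + r - i) := by
  have : (p : ℝ) ≤ i := by exact_mod_cast h
  exact min_eq_right (by nlinarith)

theorem sum_sq_sub_tent (p r : ℕ) :
    ∑ i ∈ range (p + r), (tent p r (i + 1) - tent p r i) ^ 2 = p * r ^ 2 + r * p ^ 2 := by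
  have hleft : ∀ i ∈ range p, (tent p r (i + 1) - tent p r i) ^ 2 = (r : ℝ) ^ 2 := by
    intro i hi
    rw [tent_eq_of_le (mem_range.1 hi), tent_eq_of_le (mem_range.1 hi).le]
    push_cast
    ring
  have hright : ∀ i ∈ Ico p (p + r), (tent p r (i + 1) - tent p r i) ^ 2 = (p : ℝ) ^ 2 := by
    intro i hi
    have hpi := (mem_Ico.1 hi).1
    rw [tent_eq_of_ge hpi, tent_eq_of_ge (by omega)]
    push_cast
    ring
  rw [← sum_range_add_sum_Ico _ (Nat.le_add_right p r), sum_congr rfl hleft,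
    sum_congr rfl hright]
  simp

/-- Each edge of the plumbing graph, oriented from the smaller index to the larger. -/
def pretzelEdge (p r i j : ℕ) : ℝ :=
  (if j = i + 1 ∧ j < p + r - 1 then 1 else 0) + (if i = p - 1 ∧ j = p + r - 1 then 1 else 0)

section Pretzel

variable {p r : ℕ} {q : ℤ}

theorem pretzelPlumbing_apply (hp : 1 ≤ p) (hr : 1 ≤ r) (i j : Fin (p + r)) :
    ((pretzelPlumbing p r q i j : ℤ) : ℝ) =
      (if (i : ℕ) = j then (if (i : ℕ) = p + r - 1 then (q : ℝ) else -2) else 0) +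
        (pretzelEdge p r i j + pretzelEdge p r j i) := by
  simp only [pretzelPlumbing, Matrix.of_apply, pretzelEdge, Fin.ext_iff]
  split_ifs <;> norm_num <;> omega

theorem pretzelPlumbing_dotProduct_mulVec (hp : 1 ≤ p) (hr : 1 ≤ r) (g : ℕ → ℝ)
    (x : Fin (p + r) → ℝ) (hx : ∀ i, x i = g i) :
    x ⬝ᵥ (pretzelPlumbing p r q).map (Int.cast : ℤ → ℝ) *ᵥ x =
      ∑ i ∈ range (p + r), (if i = p + r - 1 then (q : ℝ) else -2) * g i ^ 2 +
        2 * ∑ i ∈ range (p + r), ∑ j ∈ range (p + r), g i * pretzelEdge p r i j * g j := by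
  have hdiag : ∀ i ∈ range (p + r), ∑ j ∈ range (p + r),
      g i * (if i = j then (if i = p + r - 1 then (q : ℝ) else -2) else 0) * g j =
        (if i = p + r - 1 then (q : ℝ) else -2) * g i ^ 2 := fun i hi => by
    simp only [mul_ite, ite_mul, mul_zero, zero_mul, sum_ite_eq, if_pos hi]
    split_ifs <;> ring
  rw [← sum_congr rfl hdiag, ← sum_sum_mul_add_swap_mul, ← sum_add_distrib]
  simp only [← sum_add_distrib, ← add_mul, ← mul_add]
  simp only [dotProduct, mulVec, Matrix.map_apply, pretzelPlumbing_apply hp hr, hx, mul_sum,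
    ← mul_assoc]
  rw [← Fin.sum_univ_eq_sum_range (fun i => ∑ j ∈ range (p + r), _)]
  simp only [← Fin.sum_univ_eq_sum_range (fun j => _ * _ * g j)]

theorem pretzelPlumbing_quadForm (hp : 1 ≤ p) (hr : 1 ≤ r) (v : ℕ → ℝ) (hv0 : v 0 = 0)
    (hvn : v (p + r) = 0) (t : ℝ) (x : Fin (p + r) → ℝ)
    (hx : ∀ i, x i = if (i : ℕ) = p + r - 1 then t else v (i + 1)) :
    x ⬝ᵥ (pretzelPlumbing p r q).map (Int.cast : ℤ → ℝ) *ᵥ x =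
      q * t ^ 2 + 2 * v p * t - ∑ i ∈ range (p + r), (v (i + 1) - v i) ^ 2 := by
  obtain ⟨m, hm⟩ : ∃ m, p + r = m + 1 := ⟨p + r - 1, by omega⟩
  have hpm : p - 1 < m := by omega
  rw [pretzelPlumbing_dotProduct_mulVec hp hr (fun i => if i = p + r - 1 then t else v (i + 1))
    x hx]
  simp only [pretzelEdge, hm, Nat.add_sub_cancel] at hvn ⊢
  rw [sum_range_sq_sub_eq v m hv0 hvn]
  set g : ℕ → ℝ := fun i => if i = m then t else v (i + 1)
  have hg : ∀ i < m, g i = v (i + 1) := fun i hi => if_neg hi.ne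
  have hgm : g m = t := if_pos rfl
  have hdiag : ∑ i ∈ range (m + 1), (if i = m then (q : ℝ) else -2) * g i ^ 2 =
      q * t ^ 2 - 2 * ∑ i ∈ range m, v (i + 1) ^ 2 := by
    have hpath : ∀ i ∈ range m, (if i = m then (q : ℝ) else -2) * g i ^ 2 = -2 * v (i + 1) ^ 2 :=
      fun i hi => by rw [if_neg (mem_range.mp hi).ne, hg i (mem_range.mp hi)]
    rw [sum_range_succ, sum_congr rfl hpath, ← mul_sum, if_pos rfl, hgm]
    ring
  have hrow : ∀ i ∈ range (m + 1), ∑ j ∈ range (m + 1),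
      g i * ((if j = i + 1 ∧ j < m then 1 else 0) + (if i = p - 1 ∧ j = m then 1 else 0)) * g j =
        g i * ((if i + 1 < m then g (i + 1) else 0) + (if i = p - 1 then t else 0)) := by
    intro i _
    simp only [mul_add, add_mul, sum_add_distrib, ite_and, mul_ite, mul_one, mul_zero, ite_mul,
      zero_mul, sum_ite_eq', mem_range, sum_ite_irrel, sum_const_zero, lt_add_one, if_true, hgm]
    congr 1
    split_ifs <;> first | rfl | omega
  have hedge : ∑ i ∈ range (m + 1),
      g i * ((if i + 1 < m then g (i + 1) else 0) + (if i = p - 1 then t else 0)) =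
        ∑ i ∈ range m, v (i + 1) * v (i + 2) + v p * t := by
    rw [sum_range_succ, hgm, if_neg (by omega), if_neg (by omega)]
    simp only [mul_add, mul_ite, mul_zero, sum_add_distrib, sum_ite_eq', mem_range, if_pos hpm,
      add_zero]
    congr 1
    refine sum_congr rfl fun i hi => ?_
    rw [mem_range] at hi
    rw [hg i hi]
    split_ifs with h
    · rw [hg (i + 1) h]
    · rw [show i + 2 = m + 1 by omega, hvn, mul_zero]
    · rw [hg (p - 1) hpm, Nat.sub_add_cancel hp]
  rw [hdiag, sum_congr rfl hrow, hedge]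
  ring

theorem pretzelPlumbing_quadForm_neg (hp : 1 ≤ p) (hr : 1 ≤ r) (hq : (q : ℝ) < 0)
    (hc : 0 < 1 / (p : ℝ) + 1 / q + 1 / r) (x : Fin (p + r) → ℝ) (hx : x ≠ 0) :
    x ⬝ᵥ (pretzelPlumbing p r q).map (Int.cast : ℤ → ℝ) *ᵥ x < 0 := by
  set v : ℕ → ℝ := fun i => if h : 1 ≤ i ∧ i < p + r then x ⟨i - 1, by omega⟩ else 0
  set t := x ⟨p + r - 1, by omega⟩
  have hxv : ∀ i, x i = if (i : ℕ) = p + r - 1 then t else v (i + 1) := by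
    intro i
    split_ifs with h
    · exact congrArg x (Fin.ext h)
    · simp only [v, dif_pos (show 1 ≤ (i : ℕ) + 1 ∧ (i : ℕ) + 1 < p + r by omega),
        Nat.add_sub_cancel]
  have hv0 : v 0 = 0 := dif_neg (by omega)
  have hvn : v (p + r) = 0 := dif_neg (by omega)
  rw [pretzelPlumbing_quadForm hp hr v hv0 hvn t x hxv]
  set S := ∑ i ∈ range (p + r), (v (i + 1) - v i) ^ 2
  have hS : (1 / (p : ℝ) + 1 / r) * v p ^ 2 ≤ S :=
    one_div_add_one_div_mul_sq_le_sum_sq_sub v hp hr hv0 hvn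
  have hS_nonneg : 0 ≤ S := sum_nonneg fun i _ => sq_nonneg _
  have hsq : q * t ^ 2 + 2 * v p * t ≤ -(1 / q) * v p ^ 2 := by
    have : q * t ^ 2 + 2 * v p * t + 1 / q * v p ^ 2 = q * (t + v p / q) ^ 2 := by
      field_simp [hq.ne]
      ring
    nlinarith [sq_nonneg (t + v p / q)]
  refine lt_of_not_ge fun hQ => hx ?_
  have hvp : v p = 0 := by
    have : (1 / (p : ℝ) + 1 / q + 1 / r) * v p ^ 2 ≤ (1 / (p : ℝ) + 1 / q + 1 / r) * 0 := by
      linarith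
    exact pow_eq_zero_iff two_ne_zero |>.1 <|
      le_antisymm (le_of_mul_le_mul_left this hc) (sq_nonneg _)
  rw [hvp] at hQ
  have ht : t = 0 := pow_eq_zero_iff two_ne_zero |>.1 <| by nlinarith
  have hS_zero : S = 0 := by
    rw [ht] at hQ
    linarith
  ext i
  rw [hxv, Pi.zero_apply]
  split_ifs
  · exact ht
  · exact eq_zero_of_sum_sq_sub_eq_zero v hv0 hS_zero (by omega)

theorem exists_pretzelPlumbing_quadForm_nonneg (hp : 1 ≤ p) (hr : 1 ≤ r)
    (hc : 1 / (p : ℝ) + 1 / q + 1 / r ≤ 0) :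
    ∃ x : Fin (p + r) → ℝ, x ≠ 0 ∧
      0 ≤ x ⬝ᵥ (pretzelPlumbing p r q).map (Int.cast : ℤ → ℝ) *ᵥ x := by
  have hp0 : (0 : ℝ) < p := by exact_mod_cast hp
  have hr0 : (0 : ℝ) < r := by exact_mod_cast hr
  have hq : (q : ℝ) ≠ 0 := by
    intro h
    rw [h, div_zero, add_zero] at hc
    linarith [show 0 < 1 / (p : ℝ) + 1 / r by positivity]
  set t : ℝ := -(p * r) / q
  have ht : t ≠ 0 := div_ne_zero (neg_ne_zero.2 (by positivity)) hq
  refine ⟨fun i => if (i : ℕ) = p + r - 1 then t else tent p r (i + 1), fun h => ht ?_, ?_⟩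
  · simpa using congrFun h ⟨p + r - 1, by omega⟩
  · have h0 : tent p r 0 = 0 := by simp [tent_eq_of_le (Nat.zero_le p)]
    have hn : tent p r (p + r) = 0 := by simp [tent_eq_of_ge (Nat.le_add_right p r)]
    rw [pretzelPlumbing_quadForm hp hr (tent p r) h0 hn t _ fun i => rfl, sum_sq_sub_tent,
      tent_eq_of_le le_rfl]
    have hQ : (q : ℝ) * t ^ 2 + 2 * (p * r) * t - (p * r ^ 2 + r * p ^ 2) =
        -((p : ℝ) * r) ^ 2 * (1 / p + 1 / q + 1 / r) := by
      simp only [t]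
      field_simp
      ring
    rw [hQ]
    exact mul_nonneg_of_nonpos_of_nonpos (neg_nonpos.2 (sq_nonneg _)) hc

end Pretzel

open Matrix in
theorem pretzelPlumbing_negDef_iff (p r : ℕ) (q : ℤ) (hp : 1 ≤ p) (hr : 1 ≤ r) (hq : q ≤ -1) :
    (∀ x : Fin (p + r) → ℝ, x ≠ 0 →
        x ⬝ᵥ ((pretzelPlumbing p r q).map (Int.cast : ℤ → ℝ)).mulVec x < 0) ↔
      (1 : ℚ) / p + 1 / q + 1 / r > 0 := by
  have hcast : (1 : ℚ) / p + 1 / q + 1 / r > 0 ↔ 0 < 1 / (p : ℝ) + 1 / q + 1 / r := by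
    rw [gt_iff_lt, ← Rat.cast_pos (K := ℝ)]
    norm_num
  rw [hcast]
  constructor
  · intro hneg
    by_contra hc
    obtain ⟨x, hx, hQ⟩ := exists_pretzelPlumbing_quadForm_nonneg hp hr (not_lt.1 hc)
    exact (hneg x hx).not_ge hQ
  · exact pretzelPlumbing_quadForm_neg hp hr (by exact_mod_cast hq.trans_lt (by norm_num))
end

section
/- Let $p, r \ge 3$ and $q \le -3$ be integers with $-q = p\lambda^2 + r(\lambda+1)^2$ for some integer $\lambda$, and suppose $|p\lambda + r(\lambda+1)| \le p+r+1$. Then $\lambda = 0$ or $\lambda = -1$, i.e., $q = -r$ or $q = -p$. -/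
/- The integer `(p + r) λ + r` leaves the window `[-(p + r + 1), p + r + 1]` as soon as `λ ≥ 1`
or `λ ≤ -2`, so the bound forces `λ ∈ {0, -1}`; the relation `-q = p λ² + r (λ + 1)²` then
reads `q = -r` or `q = -p`. -/

theorem eq_zero_or_eq_neg_one_of_abs_mul_add_mul_add_one_le {p r lam : ℤ} (hp : 1 < p)
    (hr : 1 < r) (h : |p * lam + r * (lam + 1)| ≤ p + r + 1) : lam = 0 ∨ lam = -1 := by
  obtain ⟨hlower, hupper⟩ := abs_le.mp h
  have hle : lam ≤ 0 := by
    by_contra! hpos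
    nlinarith
  have hge : -1 ≤ lam := by
    by_contra! hneg
    nlinarith
  omega

theorem lambda_zero_or_neg_one_general (p r q lam : ℤ) (hp : 3 ≤ p) (hr : 3 ≤ r)
    (hrel : -q = p * lam ^ 2 + r * (lam + 1) ^ 2)
    (hbound : |p * lam + r * (lam + 1)| ≤ p + r + 1) :
    (lam = 0 ∧ q = -r) ∨ (lam = -1 ∧ q = -p) := by
  rcases eq_zero_or_eq_neg_one_of_abs_mul_add_mul_add_one_le (by omega) (by omega) hbound
    with rfl | rfl
  · exact Or.inl ⟨rfl, by linarith⟩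
  · exact Or.inr ⟨rfl, by linarith⟩

theorem lambda_zero_or_neg_one (p r q lam : ℤ) (hp : 3 ≤ p) (hr : 3 ≤ r) (hq : q ≤ -3)
    (hrel : -q = p * lam ^ 2 + r * (lam + 1) ^ 2)
    (hbound : |p * lam + r * (lam + 1)| ≤ p + r + 1) :
    (lam = 0 ∧ q = -r) ∨ (lam = -1 ∧ q = -p) :=
  lambda_zero_or_neg_one_general p r q lam hp hr hrel hbound
end

section
/- Let $p, r \ge 3$ and $q \le -3$ be integers with $p+r-1 \ge 5$. Suppose $\varphi : \mathbb{Z}^{p+r} \to \mathbb{Z}^{p+r}$ is a monomorphism satisfying $\varphi(f_i)\cdot\varphi(f_j) = G(f_i,f_j)$ where $G$ is the incidence matrix of the plumbing graph (path of $p+r-1$ vertices of weight $-2$ with one weight-$q$ vertex attached at position $p$), and the target carries the standard negative definite form. Then up to change of basis of the target, $\varphi(f_i) = e_i - e_{i+1}$ for $i = 1,\ldots,p+r-1$, and $\varphi(f_{p+r}) = \lambda(e_1+\cdots+e_p) + (\lambda+1)(e_{p+1}+\cdots+e_{p+r})$ for some integer $\lambda$ with $q = -p\lambda^2 - r(\lambda+1)^2$.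 -/
/-!
Every `φ(f_i)` with `i < p + r - 1` has square `2`, hence is `±e_x ± e_y`. Walking along the path,
each new root shares one coordinate with the previous root and brings in a fresh one. The only
alternative is that the third root folds back onto the first two coordinates (`A_3 = D_3`), but then
`v 0 + v 2 ∈ 2ℤ^{p+r}` pairs to `-1` with the fourth root. So, after a signed permutation of
coordinates, the path is `e_i - e_{i+1}`. The last vector `w` then pairs with it as
`c_i - c_{i+1}`, where `c_i` are its signed coordinates: these are constant except for a jump by
one after position `p`, and `w ⬝ w = -q` gives the formula for `q`.
-/

open Matrix

section DotProduct

variable {ι : Type*} [Fintype ι]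

lemma sum_sq_comp_le_dotProduct_self {R κ : Type*} [CommRing R] [LinearOrder R]
    [IsStrictOrderedRing R] (w : ι → R) {a : κ → ι} {s : Finset κ} (ha : Set.InjOn a s) :
    ∑ i ∈ s, w (a i) ^ 2 ≤ w ⬝ᵥ w := by
  classical
  rw [← Finset.sum_image (f := fun x => w x ^ 2) ha]
  simpa only [sq, dotProduct] using Finset.sum_le_univ_sum_of_nonneg fun x => mul_self_nonneg (w x)

lemma isUnit_apply_of_dotProduct_self_lt_four {w : ι → ℤ} (hw : w ⬝ᵥ w < 4) {z : ι}
    (hz : w z ≠ 0) : IsUnit (w z) := by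
  have hle : w z * w z ≤ w ⬝ᵥ w :=
    Finset.single_le_sum (fun i _ => mul_self_nonneg (w i)) (Finset.mem_univ z)
  have hpos : 0 < w z * w z := mul_self_pos.mpr hz
  have hlt : w z < 2 := by nlinarith
  have hgt : -2 < w z := by nlinarith
  rw [Int.isUnit_iff]
  omega

variable [DecidableEq ι]

lemma dotProduct_self_sub_single_apply {R : Type*} [CommRing R] (w : ι → R) (z : ι) :
    (w - Pi.single z (w z)) ⬝ᵥ (w - Pi.single z (w z)) = w ⬝ᵥ w - w z * w z := by
  simp only [sub_dotProduct, dotProduct_sub, dotProduct_single, single_dotProduct,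
    Pi.sub_apply, Pi.single_eq_same]
  ring

lemma exists_eq_single_of_dotProduct_self_eq_one {w : ι → ℤ} (hw : w ⬝ᵥ w = 1) :
    ∃ z t, IsUnit t ∧ w = Pi.single z t := by
  obtain ⟨z, hz⟩ : ∃ z, w z ≠ 0 := by
    by_contra! h
    simp [show w = 0 from funext h] at hw
  have hunit := isUnit_apply_of_dotProduct_self_lt_four (by omega) hz
  refine ⟨z, w z, hunit, ?_⟩
  rw [← sub_eq_zero, ← dotProduct_self_eq_zero, dotProduct_self_sub_single_apply, hw,
    Int.isUnit_mul_self hunit, sub_self]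

lemma exists_eq_single_sub_single_of_dotProduct_self_eq_two {w : ι → ℤ} (hw : w ⬝ᵥ w = 2) :
    ∃ x y s t, x ≠ y ∧ IsUnit s ∧ IsUnit t ∧ w = Pi.single x s - Pi.single y t := by
  obtain ⟨x, hx⟩ : ∃ x, w x ≠ 0 := by
    by_contra! h
    simp [show w = 0 from funext h] at hw
  have hunit := isUnit_apply_of_dotProduct_self_lt_four (by omega) hx
  obtain ⟨y, t, ht, hy⟩ := exists_eq_single_of_dotProduct_self_eq_one (w := w - Pi.single x (w x))
    (by rw [dotProduct_self_sub_single_apply, hw, Int.isUnit_mul_self hunit]; norm_num)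
  have hxy : x ≠ y := by
    rintro rfl
    have : (0 : ℤ) = t := by simpa using congr_fun hy x
    exact ht.ne_zero this.symm
  refine ⟨x, y, w x, -t, hxy, hunit, ht.neg, ?_⟩
  rw [Pi.single_neg, sub_neg_eq_add, ← hy]
  abel

lemma eq_neg_single_add_single_of_dotProduct_self_eq_two {w : ι → ℤ} {x y : ι} {s t : ℤ}
    (hxy : x ≠ y) (hs : IsUnit s) (ht : IsUnit t) (hw : w ⬝ᵥ w = 2) (hx : w x * s = -1)
    (hy : w y * t = -1) : w = -(Pi.single x s + Pi.single y t) := by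
  rw [← sub_eq_zero, ← dotProduct_self_eq_zero]
  simp only [sub_dotProduct, dotProduct_sub, neg_dotProduct, dotProduct_neg, add_dotProduct,
    dotProduct_add, single_dotProduct, dotProduct_single, Pi.sub_apply, Pi.neg_apply,
    Pi.add_apply, Pi.single_eq_same, Pi.single_eq_of_ne hxy, Pi.single_eq_of_ne hxy.symm, hw]
  linear_combination 2 * hx + 2 * hy + Int.isUnit_mul_self hs + Int.isUnit_mul_self ht

end DotProduct

section Chain

variable {ι : Type*}

structure IsRootChain [Fintype ι] (v : ℕ → ι → ℤ) (n : ℕ) : Prop where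
  dotProduct_self : ∀ i < n, v i ⬝ᵥ v i = 2
  dotProduct_succ : ∀ i, i + 1 < n → v (i + 1) ⬝ᵥ v i = -1
  dotProduct_of_add_two_le : ∀ i j, j + 2 ≤ i → i < n → v i ⬝ᵥ v j = 0

lemma IsRootChain.dotProduct_eq_ite [Fintype ι] {v : ℕ → ι → ℤ} {n : ℕ} (hv : IsRootChain v n)
    {k i : ℕ} (hk : k + 1 < n) (hi : i ≤ k) : v (k + 1) ⬝ᵥ v i = if i = k then -1 else 0 := by
  split_ifs with h
  · exact h ▸ hv.dotProduct_succ k hk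
  · exact hv.dotProduct_of_add_two_le _ _ (by omega) hk

/-- The standard embedding `v i = e i - e (i + 1)` of `A_n` into `ℤ^(n+1)`, up to the signed
relabelling `e i ↦ ε i • e (a i)` of coordinates. -/
structure IsStandardChain [DecidableEq ι] (v : ℕ → ι → ℤ) (n : ℕ) (a : ℕ → ι) (ε : ℕ → ℤ) :
    Prop where
  injOn : Set.InjOn a (Set.Iic n)
  isUnit : ∀ i, IsUnit (ε i)
  eq : ∀ i < n, v i = Pi.single (a i) (ε i) - Pi.single (a (i + 1)) (ε (i + 1))

end Chain

namespace IsStandardChain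

variable {ι : Type*} [DecidableEq ι] {v : ℕ → ι → ℤ} {n : ℕ} {a : ℕ → ι} {ε : ℕ → ℤ}

lemma of_eq_single_sub_single {x y : ι} {s t : ℤ} (hxy : x ≠ y) (hs : IsUnit s)
    (ht : IsUnit t) (h : v 0 = Pi.single x s - Pi.single y t) :
    IsStandardChain v 1 (fun i => if i = 0 then x else y) (fun i => if i = 0 then s else t) where
  injOn i hi j hj hij := by
    simp only [Set.mem_Iic] at hi hj
    interval_cases i <;> interval_cases j <;> simp_all [eq_comm]
  isUnit i := by split_ifs <;> assumption
  eq i hi := by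
    obtain rfl : i = 0 := by omega
    simpa using h

lemma snoc {m : ℕ} (h : IsStandardChain v (m + 1) a ε) {z : ι} {t : ℤ}
    (hz : ∀ i ≤ m + 1, a i ≠ z) (ht : IsUnit t)
    (hv : v (m + 1) = Pi.single (a (m + 1)) (ε (m + 1)) - Pi.single z t) :
    IsStandardChain v (m + 2) (Function.update a (m + 2) z) (Function.update ε (m + 2) t) where
  injOn := by
    have hIic : Set.Iic (m + 2) = insert (m + 2) (Set.Iic (m + 1)) := by
      ext i
      simp only [Set.mem_Iic, Set.mem_insert_iff]
      omega
    rw [hIic, Set.injOn_insert (by simp)]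
    refine ⟨h.injOn.congr fun i hi => (Function.update_of_ne (by simp at hi; omega) _ _).symm, ?_⟩
    rintro ⟨i, hi, hzi⟩
    rw [Function.update_of_ne (by simp at hi; omega), Function.update_self] at hzi
    exact hz i hi hzi
  isUnit i := by
    rcases eq_or_ne i (m + 2) with rfl | hi
    · simpa using ht
    · simpa [hi] using h.isUnit i
  eq i hi := by
    rcases Nat.lt_succ_iff_lt_or_eq.mp hi with hi | rfl
    · rw [Function.update_of_ne (show i ≠ m + 2 by omega),
        Function.update_of_ne (show i + 1 ≠ m + 2 by omega),
        Function.update_of_ne (show i ≠ m + 2 by omega),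
        Function.update_of_ne (show i + 1 ≠ m + 2 by omega)]
      exact h.eq i hi
    · rw [Function.update_of_ne (show m + 1 ≠ m + 2 by omega),
        Function.update_of_ne (show m + 1 ≠ m + 2 by omega), Function.update_self,
        Function.update_self, hv]

lemma mul_apply (h : IsStandardChain v n a ε) {i k : ℕ} (hi : i < n) (hk : k ≤ n) :
    ε k * v i (a k) = if k = i then 1 else if k = i + 1 then -1 else 0 := by
  have hinj : ∀ j ≤ n, a k = a j ↔ k = j := fun j hj => h.injOn.eq_iff hk hj
  simp only [h.eq i hi, Pi.sub_apply, Pi.single_apply, hinj i hi.le, hinj (i + 1) hi]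
  split_ifs <;> first | omega | subst_vars; simp [Int.isUnit_mul_self (h.isUnit _)]

variable [Fintype ι]

lemma dotProduct_eq (h : IsStandardChain v n a ε) (w : ι → ℤ) {i : ℕ} (hi : i < n) :
    w ⬝ᵥ v i = w (a i) * ε i - w (a (i + 1)) * ε (i + 1) := by
  rw [h.eq i hi, dotProduct_sub, dotProduct_single, dotProduct_single]

lemma mul_apply_eq_of_dotProduct (h : IsStandardChain v n a ε) {w : ι → ℤ} {k : ℕ}
    (hw : ∀ i < n, w ⬝ᵥ v i = if i = k then -1 else 0) :
    ∀ i ≤ n, ε i * w (a i) = ε 0 * w (a 0) + if k < i then 1 else 0 := by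
  intro i hi
  induction i with
  | zero => simp
  | succ i ih =>
    have hstep := hw i (by omega)
    rw [h.dotProduct_eq w (by omega)] at hstep
    have := ih (by omega)
    split_ifs at hstep this ⊢ <;> first | omega | linarith

lemma exists_succ {m : ℕ} (h : IsStandardChain v (m + 1) a ε)
    (hself : v (m + 1) ⬝ᵥ v (m + 1) = 2)
    (hdot : ∀ i < m + 1, v (m + 1) ⬝ᵥ v i = if i = m then -1 else 0) (h0 : v (m + 1) (a 0) = 0) :
    ∃ a' ε', IsStandardChain v (m + 2) a' ε' := by
  have hcoeff := h.mul_apply_eq_of_dotProduct hdot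
  simp only [h0, mul_zero, zero_add] at hcoeff
  have hlow : ∀ i ≤ m, v (m + 1) (a i) = 0 := by
    intro i hi
    have := hcoeff i (by omega)
    rw [if_neg (by omega)] at this
    exact (mul_eq_zero.mp this).resolve_left (h.isUnit i).ne_zero
  have htop : v (m + 1) (a (m + 1)) = ε (m + 1) := by
    have := hcoeff (m + 1) le_rfl
    rw [if_pos (by omega)] at this
    rw [← one_mul (v _ _), ← Int.isUnit_mul_self (h.isUnit (m + 1)), mul_assoc, this, mul_one]
  obtain ⟨z, t, ht, hz⟩ := exists_eq_single_of_dotProduct_self_eq_one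
    (w := v (m + 1) - Pi.single (a (m + 1)) (v (m + 1) (a (m + 1))))
    (by rw [dotProduct_self_sub_single_apply, hself, htop, Int.isUnit_mul_self (h.isUnit _)]; rfl)
  rw [htop] at hz
  have hfresh : ∀ i ≤ m + 1, a i ≠ z := by
    rintro i hi rfl
    have hzi := congr_fun hz (a i)
    rcases hi.lt_or_eq with hi | rfl
    · have hne : a i ≠ a (m + 1) := fun he => by
        have := h.injOn (Set.mem_Iic.mpr (by omega)) (Set.mem_Iic.mpr le_rfl) he
        omega
      simp [hlow i (by omega), hne] at hzi
      exact ht.ne_zero hzi.symm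
    · simp [htop] at hzi
      exact ht.ne_zero hzi.symm
  refine ⟨_, _, h.snoc hfresh ht.neg ?_⟩
  rw [Pi.single_neg, sub_neg_eq_add, ← hz]
  abel

lemma sum_sq_mul_apply_eq_dotProduct_self (h : IsStandardChain v n a ε)
    (hcard : Fintype.card ι = n + 1) (w : ι → ℤ) :
    ∑ i ∈ Finset.range (n + 1), (ε i * w (a i)) ^ 2 = w ⬝ᵥ w := by
  have hinj : Set.InjOn a (Finset.range (n + 1)) :=
    h.injOn.mono fun i hi => by simp only [Finset.coe_range, Set.mem_Iio] at hi; simp; omega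
  have himage : (Finset.range (n + 1)).image a = Finset.univ := Finset.eq_univ_of_card _ (by
    rw [Finset.card_image_of_injOn hinj, Finset.card_range, hcard])
  simp only [mul_pow, Int.isUnit_sq (h.isUnit _), one_mul]
  rw [← Finset.sum_image (f := fun x => w x ^ 2) hinj, himage, dotProduct]
  simp only [sq]

end IsStandardChain

namespace IsRootChain

variable {ι : Type*} [Fintype ι] [DecidableEq ι] {v : ℕ → ι → ℤ} {n : ℕ}

lemma exists_isStandardChain_one (hv : IsRootChain v n) (hn : 2 ≤ n) :
    ∃ a ε, IsStandardChain v 1 a ε ∧ v 1 (a 0) = 0 := by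
  obtain ⟨x, y, s, t, hxy, hs, ht, h0⟩ :=
    exists_eq_single_sub_single_of_dotProduct_self_eq_two (hv.dotProduct_self 0 (by omega))
  by_cases hx : v 1 x = 0
  · exact ⟨_, _, IsStandardChain.of_eq_single_sub_single hxy hs ht h0, by simpa using hx⟩
  by_cases hy : v 1 y = 0
  · refine ⟨_, _, IsStandardChain.of_eq_single_sub_single hxy.symm ht.neg hs.neg ?_,
      by simpa using hy⟩
    rw [h0, Pi.single_neg, Pi.single_neg]
    abel
  -- otherwise `v 1 ⬝ᵥ v 0` would be a difference of two units, hence even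
  have h10 := hv.dotProduct_succ 0 (by omega)
  rw [h0, dotProduct_sub, dotProduct_single, dotProduct_single] at h10
  have h1 : v 1 ⬝ᵥ v 1 < 4 := by rw [hv.dotProduct_self 1 (by omega)]; norm_num
  rcases Int.isUnit_iff.mp ((isUnit_apply_of_dotProduct_self_lt_four h1 hx).mul hs) with h | h <;>
    rcases Int.isUnit_iff.mp ((isUnit_apply_of_dotProduct_self_lt_four h1 hy).mul ht) with
      h' | h' <;>
    linarith

lemma two_ne_neg_single_add_single (hv : IsRootChain v n) (hn : 4 ≤ n) {a : ℕ → ι}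
    {ε : ℕ → ℤ} (h : IsStandardChain v 2 a ε) :
    v 2 ≠ -(Pi.single (a 0) (ε 0) + Pi.single (a 1) (ε 1)) := by
  intro hfold
  -- `v 0 + v 2 = -2 • e (a 1)` would pair to `0 + (-1)` with `v 3`
  have h30 := hv.dotProduct_of_add_two_le 3 0 (by omega) (by omega)
  have h32 := hv.dotProduct_succ 2 (by omega)
  rw [h.dotProduct_eq _ (by omega)] at h30
  rw [hfold, dotProduct_neg, dotProduct_add, dotProduct_single, dotProduct_single] at h32
  have : 2 * (v 3 (a 1) * ε 1) = 1 := by linarith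
  omega

lemma apply_eq_zero_of_isStandardChain (hv : IsRootChain v n) (hn : 4 ≤ n) {m : ℕ}
    {a : ℕ → ι} {ε : ℕ → ℤ} (h : IsStandardChain v (m + 1) a ε) (hm : 1 ≤ m) (hmn : m + 1 < n) :
    v (m + 1) (a 0) = 0 := by
  have hcoeff := h.mul_apply_eq_of_dotProduct fun i hi => hv.dotProduct_eq_ite hmn (by omega)
  have hsq : ∀ i, v (m + 1) (a i) ^ 2 = (ε i * v (m + 1) (a i)) ^ 2 := fun i => by
    rw [mul_pow, Int.isUnit_sq (h.isUnit i), one_mul]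
  have hbound := sum_sq_comp_le_dotProduct_self (v (m + 1)) (s := Finset.range 3)
    (h.injOn.mono fun i hi => by simp only [Finset.coe_range, Set.mem_Iio] at hi; simp; omega)
  rw [hv.dotProduct_self _ hmn, Finset.sum_range_succ, Finset.sum_range_succ,
    Finset.sum_range_one, hsq 0, hsq 1, hsq 2, hcoeff 1 (by omega), hcoeff 2 (by omega),
    if_neg (show ¬m < 1 by omega)] at hbound
  generalize hc : ε 0 * v (m + 1) (a 0) = c at hbound hcoeff
  by_contra h0
  have hc0 : c ≠ 0 := hc ▸ mul_ne_zero (h.isUnit 0).ne_zero h0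
  obtain rfl : m = 1 := by
    by_contra hm1
    rw [if_neg (by omega), add_zero] at hbound
    have : 0 < c ^ 2 := by positivity
    nlinarith
  rw [if_pos (by omega)] at hbound
  obtain rfl : c = -1 := by rcases lt_or_gt_of_ne hc0 with h' | h' <;> nlinarith
  simp only [Nat.reduceAdd] at h hcoeff
  have h01 : a 0 ≠ a 1 := fun he => by
    have := h.injOn (by simp) (by simp) he
    omega
  refine hv.two_ne_neg_single_add_single hn h ?_
  refine eq_neg_single_add_single_of_dotProduct_self_eq_two h01 (h.isUnit 0) (h.isUnit 1)
    (hv.dotProduct_self 2 (by omega)) ?_ ?_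
  · simpa [mul_comm] using hcoeff 0 (by omega)
  · simpa [mul_comm] using hcoeff 1 (by omega)

theorem exists_isStandardChain (hv : IsRootChain v n) (hn : 4 ≤ n) :
    ∃ a ε, IsStandardChain v n a ε := by
  have key : ∀ m, m + 1 < n → ∃ a ε, IsStandardChain v (m + 2) a ε := by
    intro m hm
    induction m with
    | zero =>
      obtain ⟨a, ε, h, h0⟩ := hv.exists_isStandardChain_one (by omega)
      exact h.exists_succ (hv.dotProduct_self 1 hm)
        (fun i hi => hv.dotProduct_eq_ite hm (by omega)) h0
    | succ m ih =>
      obtain ⟨a, ε, h⟩ := ih (by omega)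
      exact h.exists_succ (hv.dotProduct_self _ hm)
        (fun i hi => hv.dotProduct_eq_ite hm (by omega))
        (hv.apply_eq_zero_of_isStandardChain hn h (by omega) hm)
  obtain ⟨a, ε, h⟩ := key (n - 2) (by omega)
  exact ⟨a, ε, by rwa [show n - 2 + 2 = n by omega] at h⟩

end IsRootChain

lemma sum_range_add_ite_lt {M : Type*} [AddCommMonoid M] (p r : ℕ) (x y : M) :
    ∑ i ∈ Finset.range (p + r), (if i < p then x else y) = p • x + r • y := by
  rw [Finset.sum_range_add, Finset.sum_congr rfl fun i hi => if_pos (Finset.mem_range.mp hi)]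
  simp

section Plumbing

variable {ι : Type*} [Fintype ι] {p r : ℕ} {q : ℤ} {v : ℕ → ι → ℤ}

lemma pretzelPlumbing_apply_mk (i j : ℕ) (hi : i < p + r) (hj : j < p + r) :
    pretzelPlumbing p r q ⟨i, hi⟩ ⟨j, hj⟩ =
      if i = j then (if i = p + r - 1 then q else -2)
      else if i < p + r - 1 ∧ j < p + r - 1 ∧ ((i : ℤ) - (j : ℤ)).natAbs = 1 then 1
      else if (i = p - 1 ∧ j = p + r - 1) ∨ (i = p + r - 1 ∧ j = p - 1) then 1 else 0 := by
  simp only [pretzelPlumbing, Matrix.of_apply, Fin.mk.injEq]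

lemma isRootChain_of_pretzelPlumbing
    (hv : ∀ i j (hi : i < p + r) (hj : j < p + r),
      v i ⬝ᵥ v j = -pretzelPlumbing p r q ⟨i, hi⟩ ⟨j, hj⟩) : IsRootChain v (p + r - 1) where
  dotProduct_self i hi := by
    rw [hv i i (by omega) (by omega), pretzelPlumbing_apply_mk, if_pos rfl, if_neg (by omega)]
    rfl
  dotProduct_succ i hi := by
    rw [hv _ _ (by omega) (by omega), pretzelPlumbing_apply_mk, if_neg (by omega),
      if_pos ⟨by omega, by omega, by omega⟩]
  dotProduct_of_add_two_le i j hij hi := by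
    rw [hv _ _ (by omega) (by omega), pretzelPlumbing_apply_mk, if_neg (by omega),
      if_neg (by omega), if_neg (by omega)]
    rfl

lemma dotProduct_last_of_pretzelPlumbing
    (hv : ∀ i j (hi : i < p + r) (hj : j < p + r),
      v i ⬝ᵥ v j = -pretzelPlumbing p r q ⟨i, hi⟩ ⟨j, hj⟩) :
    ∀ i < p + r - 1, v (p + r - 1) ⬝ᵥ v i = if i = p - 1 then -1 else 0 := by
  intro i hi
  rw [hv _ _ (by omega) (by omega), pretzelPlumbing_apply_mk, if_neg (by omega), if_neg (by omega)]
  split_ifs <;> omega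

lemma dotProduct_self_last_of_pretzelPlumbing
    (hv : ∀ i j (hi : i < p + r) (hj : j < p + r),
      v i ⬝ᵥ v j = -pretzelPlumbing p r q ⟨i, hi⟩ ⟨j, hj⟩)
    (h : 0 < p + r) :
    v (p + r - 1) ⬝ᵥ v (p + r - 1) = -q := by
  rw [hv _ _ (by omega) (by omega), pretzelPlumbing_apply_mk, if_pos rfl, if_pos rfl]

end Plumbing

theorem rigidity_of_lattice_embedding (p r : ℕ) (q : ℤ)
    (hp : 3 ≤ p) (hr : 3 ≤ r)
    (φ : (Fin (p + r) → ℤ) →ₗ[ℤ] (Fin (p + r) → ℤ))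
    (hpair : ∀ i j : Fin (p + r),
      -(∑ k, φ (Pi.single i 1) k * φ (Pi.single j 1) k) = pretzelPlumbing p r q i j) :
    ∃ (σ : Equiv.Perm (Fin (p + r))) (ε : Fin (p + r) → ℤ),
      (∀ k, ε k = 1 ∨ ε k = -1) ∧
      ∃ lam : ℤ, q = -(p : ℤ) * lam ^ 2 - (r : ℤ) * (lam + 1) ^ 2 ∧
        (∀ i : Fin (p + r), (i : ℕ) < p + r - 1 →
          (fun k => ε k * φ (Pi.single i 1) (σ k)) =
            fun k : Fin (p + r) =>
              if (k : ℕ) = (i : ℕ) then 1 else if (k : ℕ) = (i : ℕ) + 1 then -1 else 0) ∧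
        ((fun k => ε k * φ (Pi.single (⟨p + r - 1, by omega⟩ : Fin (p + r)) 1) (σ k)) =
          fun k : Fin (p + r) => if (k : ℕ) < p then lam else lam + 1) := by
  set v : ℕ → Fin (p + r) → ℤ := fun i => if h : i < p + r then φ (Pi.single ⟨i, h⟩ 1) else 0
  have hv_fin (i : Fin (p + r)) : v i = φ (Pi.single i 1) := dif_pos i.isLt
  have hv (i j : ℕ) (hi : i < p + r) (hj : j < p + r) :
      v i ⬝ᵥ v j = -pretzelPlumbing p r q ⟨i, hi⟩ ⟨j, hj⟩ := by
    rw [← hpair, neg_neg, ← hv_fin, ← hv_fin]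
    rfl
  obtain ⟨a, ε, ha⟩ := (isRootChain_of_pretzelPlumbing hv).exists_isStandardChain (by omega)
  set lam := ε 0 * v (p + r - 1) (a 0)
  have hlast (k : ℕ) (hk : k < p + r) :
      ε k * v (p + r - 1) (a k) = if k < p then lam else lam + 1 := by
    rw [ha.mul_apply_eq_of_dotProduct (dotProduct_last_of_pretzelPlumbing hv) k (by omega)]
    split_ifs <;> omega
  have hσ : Function.Bijective fun k : Fin (p + r) => a k :=
    Finite.injective_iff_bijective.mp fun k l hkl =>
      Fin.ext (ha.injOn (by simp; omega) (by simp; omega) hkl)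
  refine ⟨Equiv.ofBijective _ hσ, fun k => ε k, fun k => Int.isUnit_iff.mp (ha.isUnit k), lam,
    ?_, ?_, ?_⟩
  · have hq := ha.sum_sq_mul_apply_eq_dotProduct_self (by simp; omega) (v (p + r - 1))
    rw [Nat.sub_add_cancel (by omega),
      Finset.sum_congr rfl fun k hk => by rw [hlast k (Finset.mem_range.mp hk)],
      dotProduct_self_last_of_pretzelPlumbing hv (by omega)] at hq
    simp only [ite_pow, sum_range_add_ite_lt, nsmul_eq_mul] at hq
    linarith
  · intro i hi
    funext k
    simpa [hv_fin] using ha.mul_apply hi (by omega : (k : ℕ) ≤ p + r - 1)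
  · funext k
    rw [← hv_fin]
    exact hlast k k.isLt
end
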